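/- Product of convolutions: Let A be a compact Hausdorff second-countable abelian group with normalized Haar probability measure μ, let k ≥ 1 and ε > 0, and let F = (f_v)_{v ∈ K_k} and G = (g_v)_{v ∈ K_k} be two systems of Borel measurable functions on A with ‖f_v‖_∞ ≤ 1 and ‖g_v‖_∞ ≤ 1 for all v. Then there exist a natural number n ≤ (1 + 64/ε²)² and function systems H¹,…,Hⁿ, each Hⁱ = (h_vⁱ)_{v ∈ K_k} with ‖h_vⁱ‖_∞ ≤ 1, such that ‖[F]·[G] − (1/n)·∑_{i=1}^n [Hⁱ]‖_{L²(μ)} ≤ ε. -/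

import Mathlib

/-!
Substituting `s = t + u` in the integral defining `[G](x)` and exchanging the order of
integration writes `[F](x) · [G](x)` as the average over `u ∈ A^k` of `[F ⊙ G_u](x)`, where
`(F ⊙ G_u)_v = f_v · g_v(· + v₁u₁ + ⋯ + v_k u_k)` is again a system bounded by `1`. Such an
average of functions bounded by `1` is approximated in `L²` by the mean of `n` independent
samples with mean square error at most `4/n`, since the variance of a sum of independent
centred terms is the sum of their variances; hence some choice of `n = ⌈4/ε²⌉` samples works.
-/

open MeasureTheory
open scoped BigOperators

/-- The `⋆` operation: conjugate a complex number iff the natural number parameter is odd. -/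
noncomputable def cstar (m : ℕ) (z : ℂ) : ℂ := if Even m then z else (starRingEnd ℂ) z

/-- The height `h(v)` of a cube vertex `v ∈ {0,1}^k`: the number of `1` coordinates. -/
def ht {k : ℕ} (v : Fin k → Bool) : ℕ := (Finset.univ.filter (fun i => v i = true)).card

/-- The point `x + v₁t₁ + ⋯ + v_k t_k` of the cube with base `x` and edges `t`. -/
def vertexPoint {A : Type*} [AddCommGroup A] {k : ℕ} (x : A) (t : Fin k → A)
    (v : Fin k → Bool) : A := x + ∑ i, if v i then t i else 0

/-- The Gowers integral
`G_k(f) = ∫_{A^{k+1}} ∏_{v ∈ {0,1}^k} C^{h(v)} f(x + v₁t₁ + ⋯ + v_k t_k) dμ(x)dμ(t₁)⋯dμ(t_k)`,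
so that `‖f‖_{U_k}^{2^k} = G_k(f)`. -/
noncomputable def gowersIntegral {A : Type*} [AddCommGroup A] [MeasurableSpace A]
    (μ : Measure A) (k : ℕ) (f : A → ℂ) : ℂ :=
  ∫ x, ∫ t : Fin k → A, ∏ v : Fin k → Bool, cstar (ht v) (f (vertexPoint x t v))
    ∂(Measure.pi fun _ => μ) ∂μ


/-- The corner convolution `[F]` of a system `F = (f_v)_{v ∈ K_n}` of functions on `A`. -/
noncomputable def cornerConv {A : Type*} [AddCommGroup A] [MeasurableSpace A]
    (μ : Measure A) (n : ℕ) (F : (Fin n → Bool) → A → ℂ) (x : A) : ℂ :=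
  ∫ t : Fin n → A,
    ∏ v ∈ Finset.univ.filter (fun v : Fin n → Bool => v ≠ fun _ => false),
      cstar (ht v) (F v (vertexPoint x t v))
    ∂(Measure.pi fun _ => μ)

open ComplexConjugate
open scoped ENNReal

lemma norm_cstar (m : ℕ) (z : ℂ) : ‖cstar m z‖ = ‖z‖ := by
  unfold cstar; split <;> simp

lemma cstar_mul (m : ℕ) (a b : ℂ) : cstar m (a * b) = cstar m a * cstar m b := by
  unfold cstar; split <;> simp

lemma measurable_cstar (m : ℕ) : Measurable (cstar m) := by
  unfold cstar; split
  · exact measurable_id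
  · exact continuous_star.measurable

section Integral

variable {α E : Type*} [MeasurableSpace α] [NormedAddCommGroup E] {μ : Measure α}

lemma norm_integral_le_of_forall_norm_le [NormedSpace ℝ E] [IsProbabilityMeasure μ]
    {f : α → E} {C : ℝ} (h : ∀ x, ‖f x‖ ≤ C) : ‖∫ x, f x ∂μ‖ ≤ C := by
  simpa using norm_integral_le_of_norm_le_const (μ := μ) (Filter.Eventually.of_forall h)

lemma eLpNorm_two_eq_ofReal_sqrt_integral {f : α → E} (hf : MemLp f 2 μ) :
    eLpNorm f 2 μ = ENNReal.ofReal √(∫ x, ‖f x‖ ^ 2 ∂μ) := by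
  rw [hf.eLpNorm_eq_integral_rpow_norm two_ne_zero ENNReal.ofNat_ne_top, Real.sqrt_eq_rpow]
  norm_num

end Integral

section Cube

variable {A : Type*} [AddCommGroup A] {k : ℕ}

lemma vertexPoint_add (x : A) (t u : Fin k → A) (v : Fin k → Bool) :
    vertexPoint x (t + u) v = vertexPoint x t v + vertexPoint 0 u v := by
  simp only [vertexPoint, zero_add, add_assoc, ← Finset.sum_add_distrib]
  congr 1
  refine Finset.sum_congr rfl fun i _ => ?_
  split <;> simp

noncomputable def cornerIntegrand (F : (Fin k → Bool) → A → ℂ) (x : A) (t : Fin k → A) : ℂ :=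
  ∏ v ∈ Finset.univ.filter (fun v : Fin k → Bool => v ≠ fun _ => false),
    cstar (ht v) (F v (vertexPoint x t v))

lemma cornerConv_eq_integral_cornerIntegrand [MeasurableSpace A] (μ : Measure A)
    (F : (Fin k → Bool) → A → ℂ) (x : A) :
    cornerConv μ k F x = ∫ t, cornerIntegrand F x t ∂Measure.pi fun _ => μ :=
  rfl

lemma norm_cornerIntegrand_le {F : (Fin k → Bool) → A → ℂ} (hF : ∀ v y, ‖F v y‖ ≤ 1)
    (x : A) (t : Fin k → A) : ‖cornerIntegrand F x t‖ ≤ 1 := by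
  rw [cornerIntegrand, norm_prod]
  exact Finset.prod_le_one (fun _ _ => norm_nonneg _) fun v _ =>
    (norm_cstar _ _).trans_le (hF _ _)

lemma norm_cornerConv_le [MeasurableSpace A] (μ : Measure A) [IsProbabilityMeasure μ]
    {F : (Fin k → Bool) → A → ℂ} (hF : ∀ v y, ‖F v y‖ ≤ 1) (x : A) :
    ‖cornerConv μ k F x‖ ≤ 1 :=
  norm_integral_le_of_forall_norm_le (norm_cornerIntegrand_le hF x)

def shiftProduct (F G : (Fin k → Bool) → A → ℂ) (u : Fin k → A) (v : Fin k → Bool)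
    (y : A) : ℂ :=
  F v y * G v (y + vertexPoint 0 u v)

lemma norm_shiftProduct_le {F G : (Fin k → Bool) → A → ℂ} (hF : ∀ v y, ‖F v y‖ ≤ 1)
    (hG : ∀ v y, ‖G v y‖ ≤ 1) (u : Fin k → A) (v : Fin k → Bool) (y : A) :
    ‖shiftProduct F G u v y‖ ≤ 1 := by
  rw [shiftProduct, norm_mul]
  exact mul_le_one₀ (hF _ _) (norm_nonneg _) (hG _ _)

lemma measurable_shiftProduct [MeasurableSpace A] [MeasurableAdd A]
    {F G : (Fin k → Bool) → A → ℂ} (hF : ∀ v, Measurable (F v)) (hG : ∀ v, Measurable (G v))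
    (u : Fin k → A) (v : Fin k → Bool) : Measurable (shiftProduct F G u v) :=
  (hF v).mul ((hG v).comp (measurable_add_const _))

lemma cornerIntegrand_shiftProduct (F G : (Fin k → Bool) → A → ℂ) (u : Fin k → A) (x : A)
    (t : Fin k → A) :
    cornerIntegrand (shiftProduct F G u) x t
      = cornerIntegrand F x t * cornerIntegrand G x (t + u) := by
  simp only [cornerIntegrand, ← Finset.prod_mul_distrib, ← cstar_mul, shiftProduct,
    vertexPoint_add]

variable [MeasurableSpace A] [MeasurableAdd₂ A]

lemma measurable_vertexPoint (v : Fin k → Bool) :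
    Measurable fun p : A × (Fin k → A) => vertexPoint p.1 p.2 v := by
  refine measurable_fst.add (Finset.measurable_sum _ fun i _ => ?_)
  split
  · exact (measurable_pi_apply i).comp measurable_snd
  · exact measurable_const

lemma measurable_cornerIntegrand {F : (Fin k → Bool) → A → ℂ} (hF : ∀ v, Measurable (F v)) :
    Measurable (Function.uncurry (cornerIntegrand F)) :=
  Finset.measurable_prod _ fun v _ =>
    (measurable_cstar _).comp ((hF v).comp (measurable_vertexPoint v))

lemma measurable_cornerIntegrand_mul_shift {F G : (Fin k → Bool) → A → ℂ}
    (hF : ∀ v, Measurable (F v)) (hG : ∀ v, Measurable (G v)) :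
    Measurable fun p : A × (Fin k → A) × (Fin k → A) =>
      cornerIntegrand F p.1 p.2.1 * cornerIntegrand G p.1 (p.2.1 + p.2.2) :=
  ((measurable_cornerIntegrand hF).comp (by fun_prop :
      Measurable fun p : A × (Fin k → A) × (Fin k → A) => (p.1, p.2.1))).mul
    ((measurable_cornerIntegrand hG).comp (by fun_prop :
      Measurable fun p : A × (Fin k → A) × (Fin k → A) => (p.1, p.2.1 + p.2.2)))

lemma measurable_cornerConv_shiftProduct (μ : Measure A) [SigmaFinite μ]
    {F G : (Fin k → Bool) → A → ℂ} (hF : ∀ v, Measurable (F v)) (hG : ∀ v, Measurable (G v)) :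
    Measurable fun p : (Fin k → A) × A => cornerConv μ k (shiftProduct F G p.1) p.2 := by
  simp only [cornerConv_eq_integral_cornerIntegrand, cornerIntegrand_shiftProduct]
  exact ((measurable_cornerIntegrand_mul_shift hF hG).comp (by fun_prop :
    Measurable fun q : ((Fin k → A) × A) × (Fin k → A) => (q.1.2, q.2, q.1.1))
    ).stronglyMeasurable.integral_prod_right'.measurable

lemma cornerConv_mul_cornerConv (μ : Measure A) [IsFiniteMeasure μ] [μ.IsAddLeftInvariant]
    {F G : (Fin k → Bool) → A → ℂ} (hFm : ∀ v, Measurable (F v)) (hF : ∀ v y, ‖F v y‖ ≤ 1)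
    (hGm : ∀ v, Measurable (G v)) (hG : ∀ v y, ‖G v y‖ ≤ 1) (x : A) :
    cornerConv μ k F x * cornerConv μ k G x
      = ∫ u, cornerConv μ k (shiftProduct F G u) x ∂Measure.pi fun _ => μ := by
  set ν : Measure (Fin k → A) := Measure.pi fun _ => μ
  set P := cornerIntegrand F x
  set Q := cornerIntegrand G x
  have hPQ : Integrable (Function.uncurry fun t u => P t * Q (t + u)) (ν.prod ν) := by
    refine Integrable.of_bound ((measurable_cornerIntegrand_mul_shift hFm hGm).comp
      (measurable_const.prodMk measurable_id)).aestronglyMeasurable 1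
      (Filter.Eventually.of_forall fun p => ?_)
    rw [Function.uncurry_apply_pair, norm_mul]
    exact mul_le_one₀ (norm_cornerIntegrand_le hF _ _) (norm_nonneg _)
      (norm_cornerIntegrand_le hG _ _)
  calc cornerConv μ k F x * cornerConv μ k G x
      = ∫ t, P t * ∫ s, Q s ∂ν ∂ν := (integral_mul_const _ _).symm
    _ = ∫ t, ∫ u, P t * Q (t + u) ∂ν ∂ν := by
        congr 1 with t
        rw [← integral_add_left_eq_self Q t, integral_const_mul]
    _ = ∫ u, ∫ t, P t * Q (t + u) ∂ν ∂ν := integral_integral_swap hPQ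
    _ = ∫ u, cornerConv μ k (shiftProduct F G u) x ∂ν := by
        simp only [cornerConv_eq_integral_cornerIntegrand, cornerIntegrand_shiftProduct, P, Q, ν]

end Cube

section Sampling

variable {U : Type*} [MeasurableSpace U] {ν : Measure U} [IsProbabilityMeasure ν]

lemma norm_one_div_mul_sum_le_one {n : ℕ} {f : Fin n → ℂ} (hf : ∀ i, ‖f i‖ ≤ 1) :
    ‖(1 / n : ℂ) * ∑ i, f i‖ ≤ 1 := by
  rcases n.eq_zero_or_pos with rfl | hn
  · simp
  rw [norm_mul, one_div, norm_inv, Complex.norm_natCast, inv_mul_le_iff₀ (by positivity), mul_one]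
  simpa using norm_sum_le_of_le Finset.univ fun i _ => hf i

lemma integral_pi_mul_conj_eval_eval {d : U → ℂ} (hd : ∫ u, d u ∂ν = 0) {n : ℕ}
    (i j : Fin n) :
    ∫ w, d (w i) * conj (d (w j)) ∂Measure.pi (fun _ : Fin n => ν)
      = if i = j then ∫ u, d u * conj (d u) ∂ν else 0 := by
  have hprod := integral_fintype_prod_eq_prod (μ := fun _ : Fin n => ν)
    (fun m u => (if m = i then d u else 1) * (if m = j then conj (d u) else 1))
  simp only [Finset.prod_mul_distrib, Finset.prod_ite_eq', Finset.mem_univ, if_true] at hprod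
  rw [hprod]
  split_ifs with hij
  · subst hij
    rw [Finset.prod_eq_single i (fun m _ hmi => by simp [hmi]) (by simp)]
    simp
  · exact Finset.prod_eq_zero (Finset.mem_univ i) (by simpa [hij] using hd)

lemma integral_pi_norm_sum_sq {d : U → ℂ} (hdm : Measurable d) {C : ℝ}
    (hdC : ∀ u, ‖d u‖ ≤ C) (hd : ∫ u, d u ∂ν = 0) (n : ℕ) :
    ∫ w, ‖∑ i, d (w i)‖ ^ 2 ∂Measure.pi (fun _ : Fin n => ν)
      = n * ∫ u, ‖d u‖ ^ 2 ∂ν := by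
  have hint : ∀ i j : Fin n, Integrable (fun w : Fin n → U => d (w i) * conj (d (w j)))
      (Measure.pi fun _ => ν) := fun i j =>
    Integrable.of_bound (((hdm.comp (measurable_pi_apply i)).mul
      (continuous_star.measurable.comp (hdm.comp (measurable_pi_apply j)))).aestronglyMeasurable)
      (C * C) (Filter.Eventually.of_forall fun w => by
        rw [norm_mul, RCLike.norm_conj]
        exact mul_le_mul (hdC _) (hdC _) (norm_nonneg _) ((norm_nonneg _).trans (hdC (w i))))
  apply Complex.ofReal_injective
  calc ((∫ w, ‖∑ i, d (w i)‖ ^ 2 ∂Measure.pi (fun _ : Fin n => ν) : ℝ) : ℂ)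
      = ∫ w, ∑ i, ∑ j, d (w i) * conj (d (w j)) ∂Measure.pi (fun _ : Fin n => ν) := by
        rw [← integral_complex_ofReal]
        congr with w
        rw [← Finset.sum_mul_sum, ← map_sum, Complex.mul_conj']
        push_cast; rfl
    _ = ∑ i, ∫ u, d u * conj (d u) ∂ν := by
        rw [integral_finsetSum _ fun i _ => integrable_finsetSum _ fun j _ => hint i j]
        simp_rw [integral_finsetSum _ fun j _ => hint _ j, integral_pi_mul_conj_eval_eval hd,
          Finset.sum_ite_eq, Finset.mem_univ, if_true]
        rfl
    _ = ((n * ∫ u, ‖d u‖ ^ 2 ∂ν : ℝ) : ℂ) := by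
        simp only [Complex.mul_conj', Finset.sum_const, Finset.card_univ, Fintype.card_fin,
          nsmul_eq_mul, Complex.ofReal_mul, Complex.ofReal_natCast, ← integral_complex_ofReal]
        norm_cast

lemma integral_pi_norm_integral_sub_sampleMean_sq_le {c : U → ℂ} (hcm : Measurable c)
    (hc : ∀ u, ‖c u‖ ≤ 1) {n : ℕ} (hn : 0 < n) :
    ∫ w, ‖∫ u, c u ∂ν - (1 / n : ℂ) * ∑ i, c (w i)‖ ^ 2 ∂Measure.pi (fun _ : Fin n => ν)
      ≤ 4 / n := by
  set d : U → ℂ := fun u => c u - ∫ u, c u ∂ν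
  have hd2 : ∀ u, ‖d u‖ ≤ 2 := fun u => (norm_sub_le _ _).trans
    (by linarith [hc u, norm_integral_le_of_forall_norm_le (μ := ν) hc])
  have hd0 : ∫ u, d u ∂ν = 0 := by
    rw [integral_sub (Integrable.of_bound hcm.aestronglyMeasurable 1
      (Filter.Eventually.of_forall hc)) (integrable_const _)]
    simp
  have hsample : ∀ w : Fin n → U,
      ∫ u, c u ∂ν - (1 / n : ℂ) * ∑ i, c (w i) = -((1 / n : ℂ) * ∑ i, d (w i)) := by
    intro w
    have : (n : ℂ) ≠ 0 := Nat.cast_ne_zero.mpr hn.ne'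
    simp only [d, Finset.sum_sub_distrib, Finset.sum_const, Finset.card_univ, Fintype.card_fin,
      nsmul_eq_mul]
    field_simp
    ring
  have hvar : ∫ u, ‖d u‖ ^ 2 ∂ν ≤ 4 :=
    (Real.le_norm_self _).trans (norm_integral_le_of_forall_norm_le fun u => by
      rw [Real.norm_of_nonneg (by positivity)]
      nlinarith [hd2 u, norm_nonneg (d u)])
  calc _ = ∫ w, (1 / n : ℝ) ^ 2 * ‖∑ i, d (w i)‖ ^ 2 ∂Measure.pi (fun _ : Fin n => ν) := by
        congr with w
        rw [hsample, norm_neg, norm_mul, mul_pow, one_div, norm_inv, Complex.norm_natCast, one_div]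
    _ = (1 / n : ℝ) ^ 2 * (n * ∫ u, ‖d u‖ ^ 2 ∂ν) := by
        rw [integral_const_mul, integral_pi_norm_sum_sq (hcm.sub_const _) hd2 hd0]
    _ ≤ (1 / n : ℝ) ^ 2 * (n * 4) := by gcongr
    _ = 4 / n := by field_simp

theorem exists_eLpNorm_integral_sub_sampleMean_le {X : Type*} [MeasurableSpace X]
    (μ : Measure X) [IsProbabilityMeasure μ] {c : U → X → ℂ}
    (hcm : Measurable (Function.uncurry c)) (hc : ∀ u x, ‖c u x‖ ≤ 1) {n : ℕ} (hn : 0 < n) :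
    ∃ w : Fin n → U,
      eLpNorm (fun x => ∫ u, c u x ∂ν - (1 / n : ℂ) * ∑ i, c (w i) x) 2 μ
        ≤ ENNReal.ofReal (2 / √n) := by
  set err : (Fin n → U) → X → ℂ := fun w x =>
    ∫ u, c u x ∂ν - (1 / n : ℂ) * ∑ i, c (w i) x
  have herr_meas : Measurable (Function.uncurry err) := by
    refine Measurable.sub ?_ (measurable_const.mul (Finset.measurable_sum _ fun i _ =>
      hcm.comp (by fun_prop : Measurable fun p : (Fin n → U) × X => (p.1 i, p.2))))
    exact ((hcm.comp measurable_swap).stronglyMeasurable.integral_prod_right' (ν := ν)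
      ).measurable.comp measurable_snd
  have herr_le : ∀ w x, ‖err w x‖ ≤ 2 := fun w x => (norm_sub_le _ _).trans
    (by linarith [norm_integral_le_of_forall_norm_le (μ := ν) (hc · x),
      norm_one_div_mul_sum_le_one fun i => hc (w i) x])
  have hint : Integrable (Function.uncurry fun w x => ‖err w x‖ ^ 2)
      ((Measure.pi fun _ : Fin n => ν).prod μ) := by
    refine Integrable.of_bound (herr_meas.norm.pow_const 2).aestronglyMeasurable 4
      (Filter.Eventually.of_forall fun p => ?_)
    rw [Function.uncurry_apply_pair, Real.norm_of_nonneg (by positivity)]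
    nlinarith [herr_le p.1 p.2, norm_nonneg (err p.1 p.2)]
  obtain ⟨w, hw⟩ := exists_le_integral hint.integral_prod_left
  refine ⟨w, ?_⟩
  have hmem : MemLp (err w) 2 μ := MemLp.of_bound
    (herr_meas.comp (measurable_const.prodMk measurable_id)).aestronglyMeasurable 2
    (Filter.Eventually.of_forall (herr_le w))
  have hmean : ∫ x, ‖err w x‖ ^ 2 ∂μ ≤ 4 / n :=
    calc ∫ x, ‖err w x‖ ^ 2 ∂μ
        ≤ ∫ w, ∫ x, ‖err w x‖ ^ 2 ∂μ ∂Measure.pi fun _ => ν := hw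
      _ = ∫ x, ∫ w, ‖err w x‖ ^ 2 ∂(Measure.pi fun _ => ν) ∂μ :=
          integral_integral_swap hint
      _ ≤ 4 / n := (Real.le_norm_self _).trans (norm_integral_le_of_forall_norm_le fun x => by
          rw [Real.norm_of_nonneg (integral_nonneg fun _ => by positivity)]
          exact integral_pi_norm_integral_sub_sampleMean_sq_le
            (hcm.comp (measurable_id.prodMk measurable_const)) (hc · x) hn)
  rw [eLpNorm_two_eq_ofReal_sqrt_integral hmem]
  refine ENNReal.ofReal_le_ofReal ((Real.sqrt_le_sqrt hmean).trans_eq ?_)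
  rw [Real.sqrt_div' _ (Nat.cast_nonneg n), show (4 : ℝ) = 2 ^ 2 by norm_num,
    Real.sqrt_sq zero_le_two]

end Sampling

theorem product_of_convolutions_general
    {A : Type*} [AddCommGroup A] [TopologicalSpace A] [IsTopologicalAddGroup A]
    [SecondCountableTopology A]
    [MeasurableSpace A] [BorelSpace A]
    (μ : Measure A) [μ.IsAddHaarMeasure] [IsProbabilityMeasure μ]
    (k : ℕ) (ε : ℝ) (hε : 0 < ε)
    (F G : (Fin k → Bool) → A → ℂ)
    (hFmeas : ∀ v, Measurable (F v)) (hFbd : ∀ v x, ‖F v x‖ ≤ 1)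
    (hGmeas : ∀ v, Measurable (G v)) (hGbd : ∀ v x, ‖G v x‖ ≤ 1) :
    ∃ n : ℕ, 0 < n ∧ (n : ℝ) ≤ (1 + 64 / ε ^ 2) ^ 2 ∧
      ∃ H : Fin n → (Fin k → Bool) → A → ℂ,
        (∀ i v, Measurable (H i v)) ∧ (∀ i v x, ‖H i v x‖ ≤ 1) ∧
        eLpNorm
          (fun x => cornerConv μ k F x * cornerConv μ k G x -
            (1 / n : ℂ) * ∑ i, cornerConv μ k (H i) x) 2 μ
          ≤ ENNReal.ofReal ε := by
  set n := ⌈4 / ε ^ 2⌉₊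
  have hn : 0 < n := Nat.ceil_pos.mpr (by positivity)
  have hn_le : (n : ℝ) ≤ (1 + 64 / ε ^ 2) ^ 2 := by
    calc (n : ℝ) ≤ 1 + 4 / ε ^ 2 := by
          linarith [Nat.ceil_lt_add_one (by positivity : 0 ≤ 4 / ε ^ 2)]
      _ ≤ 1 + 64 / ε ^ 2 := by gcongr; norm_num
      _ ≤ (1 + 64 / ε ^ 2) ^ 2 := le_self_pow₀ (by simp; positivity) two_ne_zero
  have hεn : 2 / √n ≤ ε := by
    rw [div_le_iff₀ (by positivity), ← div_le_iff₀' hε,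
      Real.le_sqrt (by positivity) (by positivity), div_pow]
    exact (le_of_eq (by norm_num)).trans (Nat.le_ceil _)
  obtain ⟨w, hw⟩ := exists_eLpNorm_integral_sub_sampleMean_le (ν := Measure.pi fun _ => μ) μ
    (measurable_cornerConv_shiftProduct μ hFmeas hGmeas)
    (fun u => norm_cornerConv_le μ (norm_shiftProduct_le hFbd hGbd u)) hn
  refine ⟨n, hn, hn_le, fun i => shiftProduct F G (w i),
    fun i => measurable_shiftProduct hFmeas hGmeas (w i),
    fun i => norm_shiftProduct_le hFbd hGbd (w i), ?_⟩
  simp_rw [cornerConv_mul_cornerConv μ hFmeas hFbd hGmeas hGbd]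
  exact hw.trans (ENNReal.ofReal_le_ofReal hεn)

/-- Product of convolutions: the pointwise product `[F]·[G]` of two corner
convolutions of systems of functions bounded by `1` is approximable in `L²` with error `ε`
by an average of at most `(1 + 64/ε²)²` corner convolutions of systems bounded by `1`. -/
theorem product_of_convolutions
    {A : Type*} [AddCommGroup A] [TopologicalSpace A] [IsTopologicalAddGroup A]
    [CompactSpace A] [T2Space A] [SecondCountableTopology A]
    [MeasurableSpace A] [BorelSpace A]
    (μ : Measure A) [μ.IsAddHaarMeasure] [IsProbabilityMeasure μ]
    (k : ℕ) (hk : 1 ≤ k) (ε : ℝ) (hε : 0 < ε)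
    (F G : (Fin k → Bool) → A → ℂ)
    (hFmeas : ∀ v, Measurable (F v)) (hFbd : ∀ v x, ‖F v x‖ ≤ 1)
    (hGmeas : ∀ v, Measurable (G v)) (hGbd : ∀ v x, ‖G v x‖ ≤ 1) :
    ∃ n : ℕ, 0 < n ∧ (n : ℝ) ≤ (1 + 64 / ε ^ 2) ^ 2 ∧
      ∃ H : Fin n → (Fin k → Bool) → A → ℂ,
        (∀ i v, Measurable (H i v)) ∧ (∀ i v x, ‖H i v x‖ ≤ 1) ∧
        eLpNorm
          (fun x => cornerConv μ k F x * cornerConv μ k G x -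
            (1 / n : ℂ) * ∑ i, cornerConv μ k (H i) x) 2 μ
          ≤ ENNReal.ofReal ε :=
  product_of_convolutions_general μ k ε hε F G hFmeas hFbd hGmeas hGbd
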